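/- arXiv:2206.02702 — 4 statements merged into one kernel-verified Lean document; each statement's English description precedes it below -/
import Mathlib

section
/- Let f : ℝ^d → ℝ be μ-strongly convex with twice continuously differentiable and L-Lipschitz Hessian, with minimizer x*. If ‖x − x*‖_{∇²f(x*)} < ε·μ^{3/2}/L for some ε ∈ (0,1), then (1−ε)·∇²f(x*) ⪯ ∇²f(x) ⪯ (1+ε)·∇²f(x*) (in the positive semidefinite order). -/
open scoped RealInnerProductSpace

/-- For a μ-strongly convex `f` with L-Lipschitz Hessian and minimizer `x*`,
if `‖x − x*‖_{∇²f(x*)} < ε μ^{3/2}/L` with `ε ∈ (0,1)`, then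
`(1−ε)∇²f(x*) ⪯ ∇²f(x) ⪯ (1+ε)∇²f(x*)`. -/
theorem stmt1 {d : ℕ} (f : EuclideanSpace ℝ (Fin d) → ℝ) (μ L ε : ℝ)
    (xs x : EuclideanSpace ℝ (Fin d))
    (hf : ContDiff ℝ 2 f)
    (hμ : 0 < μ) (hL : 0 < L) (hε : ε ∈ Set.Ioo (0:ℝ) 1)
    (hsc : ∀ z v, μ * ‖v‖ ^ 2 ≤ ⟪v, fderiv ℝ (gradient f) z v⟫)
    (hlip : ∀ z w, ‖fderiv ℝ (gradient f) z - fderiv ℝ (gradient f) w‖ ≤ L * ‖z - w‖)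
    (hmin : ∀ y, f xs ≤ f y)
    (hnear : Real.sqrt ⟪x - xs, fderiv ℝ (gradient f) xs (x - xs)⟫
      < ε * μ ^ ((3:ℝ)/2) / L) :
    ∀ v, (1 - ε) * ⟪v, fderiv ℝ (gradient f) xs v⟫ ≤ ⟪v, fderiv ℝ (gradient f) x v⟫ ∧
      ⟪v, fderiv ℝ (gradient f) x v⟫ ≤ (1 + ε) * ⟪v, fderiv ℝ (gradient f) xs v⟫ := by
  obtain ⟨hε0, hε1⟩ := hε
  intro v
  set H := fun z => fderiv ℝ (gradient f) z with hH
  -- step 1: ‖x - xs‖ < ε μ / L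
  have h1 : μ * ‖x - xs‖ ^ 2 ≤ ⟪x - xs, H xs (x - xs)⟫ := hsc xs (x - xs)
  have hsq : (0:ℝ) < Real.sqrt μ := Real.sqrt_pos.mpr hμ
  have heq : Real.sqrt (μ * ‖x - xs‖ ^ 2) = Real.sqrt μ * ‖x - xs‖ := by
    rw [Real.sqrt_mul hμ.le, Real.sqrt_sq (norm_nonneg _)]
  have h2 : Real.sqrt μ * ‖x - xs‖ < ε * μ ^ ((3:ℝ)/2) / L := by
    calc Real.sqrt μ * ‖x - xs‖ = Real.sqrt (μ * ‖x - xs‖ ^ 2) := heq.symm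
      _ ≤ Real.sqrt ⟪x - xs, H xs (x - xs)⟫ := Real.sqrt_le_sqrt h1
      _ < ε * μ ^ ((3:ℝ)/2) / L := hnear
  have hrpow : μ ^ ((3:ℝ)/2) = μ * Real.sqrt μ := by
    rw [show (3:ℝ)/2 = 1 + 1/2 by ring, Real.rpow_add hμ, Real.rpow_one,
      ← Real.sqrt_eq_rpow]
  have hwlt : ‖x - xs‖ < ε * μ / L := by
    rw [hrpow] at h2
    rw [lt_div_iff₀ hL]
    have h2' := (lt_div_iff₀ hL).mp h2
    nlinarith [hsq, h2']
  -- step 2: operator norm bound on the Hessian difference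
  have hopn : ‖H x - H xs‖ < ε * μ := by
    calc ‖H x - H xs‖ ≤ L * ‖x - xs‖ := hlip x xs
      _ < L * (ε * μ / L) := by
        exact mul_lt_mul_of_pos_left hwlt hL
      _ = ε * μ := by field_simp
  -- quadratic form bound
  have hquad : |⟪v, H x v⟫ - ⟪v, H xs v⟫| ≤ ε * μ * ‖v‖ ^ 2 := by
    have e1 : ⟪v, H x v⟫ - ⟪v, H xs v⟫ = ⟪v, (H x - H xs) v⟫ := by
      rw [ContinuousLinearMap.sub_apply, inner_sub_right]
    rw [e1]
    calc |⟪v, (H x - H xs) v⟫| ≤ ‖v‖ * ‖(H x - H xs) v‖ := abs_real_inner_le_norm _ _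
      _ ≤ ‖v‖ * (‖H x - H xs‖ * ‖v‖) := by
        gcongr
        exact ContinuousLinearMap.le_opNorm _ _
      _ ≤ ‖v‖ * (ε * μ * ‖v‖) := by gcongr
      _ = ε * μ * ‖v‖ ^ 2 := by ring
  have hμv : ε * (μ * ‖v‖ ^ 2) ≤ ε * ⟪v, H xs v⟫ :=
    mul_le_mul_of_nonneg_left (hsc xs v) hε0.le
  have habs := abs_le.mp hquad
  constructor <;> nlinarith [habs.1, habs.2, hμv]
end

section
/- Let f : ℝ^d → ℝ be μ-strongly convex with L-Lipschitz Hessian and minimizer x*. If ‖x − x*‖_{∇²f(x*)} < ε·μ^{3/2}/L with ε ∈ (0,1), then the exact Newton step satisfies ‖x − x* − ∇²f(x)^{-1}∇f(x)‖_{∇²f(x)} ≤ ε·‖x − x*‖_{∇²f(x)}. -/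
open scoped RealInnerProductSpace

/-!
Write `H = ∇²f(x)`, `e = x − x*` and `r = e − p`. Since `∇f(x*) = 0`, the vector
`H r = ∇f(x*) − ∇f(x) − H (x* − x)` is a first-order Taylor remainder of `∇f`, so the Lipschitz
Hessian gives `‖H r‖ ≤ L ‖e‖²`. Strong convexity turns the hypothesis on `‖e‖_{∇²f(x*)}` into
`L ‖e‖ < ε μ`, hence `‖H r‖ ≤ ε μ ‖e‖`. For any `H ⪰ μ I` one has `μ ‖r‖²_H ≤ ‖H r‖²` and
`μ² ‖e‖² ≤ μ ‖e‖²_H`, which converts this into `‖r‖_H ≤ ε ‖e‖_H`.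
-/

section Coercive

variable {E : Type*} [NormedAddCommGroup E] [InnerProductSpace ℝ E] {A : E →L[ℝ] E} {μ : ℝ}

theorem mul_norm_le_norm_apply_of_coercive (hA : ∀ v, μ * ‖v‖ ^ 2 ≤ ⟪v, A v⟫) (v : E) :
    μ * ‖v‖ ≤ ‖A v‖ := by
  have h := (hA v).trans (real_inner_le_norm v (A v))
  rcases (norm_nonneg v).eq_or_lt with hv | hv
  · simp [← hv]
  · exact le_of_mul_le_mul_right (by linear_combination h) hv

theorem mul_inner_apply_self_le_norm_apply_sq (hμ : 0 ≤ μ)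
    (hA : ∀ v, μ * ‖v‖ ^ 2 ≤ ⟪v, A v⟫) (v : E) : μ * ⟪v, A v⟫ ≤ ‖A v‖ ^ 2 :=
  calc μ * ⟪v, A v⟫ ≤ μ * (‖v‖ * ‖A v‖) := by gcongr; exact real_inner_le_norm v (A v)
    _ = μ * ‖v‖ * ‖A v‖ := by ring
    _ ≤ ‖A v‖ * ‖A v‖ := by gcongr; exact mul_norm_le_norm_apply_of_coercive hA v
    _ = ‖A v‖ ^ 2 := (sq _).symm

theorem sqrt_mul_norm_le_sqrt_inner_apply_self (hA : ∀ v, μ * ‖v‖ ^ 2 ≤ ⟪v, A v⟫) (v : E) :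
    √μ * ‖v‖ ≤ √⟪v, A v⟫ := by
  rw [← Real.sqrt_sq (norm_nonneg v), ← Real.sqrt_mul' _ (sq_nonneg _)]
  exact Real.sqrt_le_sqrt (hA v)

theorem sqrt_inner_apply_self_le_of_norm_apply_le (hμ : 0 < μ)
    (hA : ∀ v, μ * ‖v‖ ^ 2 ≤ ⟪v, A v⟫) {ε : ℝ} (hε : 0 ≤ ε) {v e : E}
    (hv : ‖A v‖ ≤ ε * μ * ‖e‖) : √⟪v, A v⟫ ≤ ε * √⟪e, A e⟫ := by
  suffices h : ⟪v, A v⟫ ≤ ε ^ 2 * ⟪e, A e⟫ by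
    rw [← Real.sqrt_sq hε, ← Real.sqrt_mul (sq_nonneg ε)]
    exact Real.sqrt_le_sqrt h
  refine le_of_mul_le_mul_left ?_ hμ
  calc μ * ⟪v, A v⟫ ≤ ‖A v‖ ^ 2 := mul_inner_apply_self_le_norm_apply_sq hμ.le hA v
    _ ≤ (ε * μ * ‖e‖) ^ 2 := by gcongr
    _ = μ * (ε ^ 2 * (μ * ‖e‖ ^ 2)) := by ring
    _ ≤ μ * (ε ^ 2 * ⟪e, A e⟫) := by gcongr; exact hA e

end Coercive

theorem norm_sub_sub_fderiv_apply_le_of_lipschitz_fderiv {E F : Type*} [NormedAddCommGroup E]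
    [NormedSpace ℝ E] [NormedAddCommGroup F] [NormedSpace ℝ F] {g : E → F} {L : ℝ}
    (hL : 0 ≤ L) (hg : Differentiable ℝ g)
    (hlip : ∀ z w, ‖fderiv ℝ g z - fderiv ℝ g w‖ ≤ L * ‖z - w‖) (x y : E) :
    ‖g y - g x - fderiv ℝ g x (y - x)‖ ≤ L * ‖y - x‖ ^ 2 := by
  rw [sq, ← mul_assoc]
  refine (convex_segment x y).norm_image_sub_le_of_norm_fderiv_le' (fun z _ ↦ hg z)
    (fun z hz ↦ ?_) (left_mem_segment ℝ x y) (right_mem_segment ℝ x y)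
  calc ‖fderiv ℝ g z - fderiv ℝ g x‖ ≤ L * ‖z - x‖ := hlip z x
    _ ≤ L * ‖y - x‖ := by gcongr; exact norm_sub_le_of_mem_segment hz

section Gradient

variable {F : Type*} [NormedAddCommGroup F] [InnerProductSpace ℝ F] [CompleteSpace F] {f : F → ℝ}

theorem ContDiff.differentiable_gradient {n : WithTop ℕ∞} (hf : ContDiff ℝ n f) (hn : 2 ≤ n) :
    Differentiable ℝ (gradient f) :=
  (InnerProductSpace.toDual ℝ F).symm.differentiable.comp
    ((hf.fderiv_right (m := 1) hn).differentiable one_ne_zero)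

theorem IsLocalMin.gradient_eq_zero {a : F} (h : IsLocalMin f a) : gradient f a = 0 := by
  simp [gradient, h.fderiv_eq_zero]

end Gradient

/-- Under the same assumptions as Statement 1, the exact Newton step
`p = ∇²f(x)⁻¹∇f(x)` satisfies `‖x − x* − p‖_{∇²f(x)} ≤ ε ‖x − x*‖_{∇²f(x)}`. -/
theorem stmt2 {d : ℕ} (f : EuclideanSpace ℝ (Fin d) → ℝ) (μ L ε : ℝ)
    (xs x : EuclideanSpace ℝ (Fin d))
    (hf : ContDiff ℝ 2 f)
    (hμ : 0 < μ) (hL : 0 < L) (hε : ε ∈ Set.Ioo (0:ℝ) 1)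
    (hsc : ∀ z v, μ * ‖v‖ ^ 2 ≤ ⟪v, fderiv ℝ (gradient f) z v⟫)
    (hlip : ∀ z w, ‖fderiv ℝ (gradient f) z - fderiv ℝ (gradient f) w‖ ≤ L * ‖z - w‖)
    (hmin : ∀ y, f xs ≤ f y)
    (hnear : Real.sqrt ⟪x - xs, fderiv ℝ (gradient f) xs (x - xs)⟫
      < ε * μ ^ ((3:ℝ)/2) / L) :
    ∀ p : EuclideanSpace ℝ (Fin d), fderiv ℝ (gradient f) x p = gradient f x →
      Real.sqrt ⟪x - xs - p, fderiv ℝ (gradient f) x (x - xs - p)⟫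
        ≤ ε * Real.sqrt ⟪x - xs, fderiv ℝ (gradient f) x (x - xs)⟫ := by
  intro p hp
  set H := fderiv ℝ (gradient f) x
  have hxs : gradient f xs = 0 := IsLocalMin.gradient_eq_zero (.of_forall hmin)
  have hres : H (x - xs - p) = gradient f xs - gradient f x - H (xs - x) := by
    simp only [map_sub, hp, hxs]; abel
  have hclose : L * ‖x - xs‖ < ε * μ := by
    have h := (sqrt_mul_norm_le_sqrt_inner_apply_self (hsc xs) (x - xs)).trans_lt hnear
    rw [show μ ^ ((3:ℝ)/2) = √μ * μ by
      rw [Real.sqrt_eq_rpow, ← Real.rpow_add_one hμ.ne']; norm_num, lt_div_iff₀ hL] at h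
    exact lt_of_mul_lt_mul_left (by linear_combination h) (Real.sqrt_nonneg μ)
  have hHr : ‖H (x - xs - p)‖ ≤ ε * μ * ‖x - xs‖ :=
    calc ‖H (x - xs - p)‖ ≤ L * ‖xs - x‖ ^ 2 := hres ▸
          norm_sub_sub_fderiv_apply_le_of_lipschitz_fderiv hL.le
            (hf.differentiable_gradient le_rfl) hlip x xs
      _ = L * ‖x - xs‖ * ‖x - xs‖ := by rw [norm_sub_rev]; ring
      _ ≤ ε * μ * ‖x - xs‖ := by gcongr
  exact sqrt_inner_apply_self_le_of_norm_apply_le hμ (hsc x) hε.1.le hHr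
end

section
/- Let A be an n×d real matrix of rank d, with rows a₁ᵀ,...,aₙᵀ, and let H = (1/n)AᵀA. Let p be a probability vector on {1,...,n} with p_i ≥ ‖a_i‖²_{(AᵀA)^{-1}}/(Cd) for all i, where C > 0. For f(x) = (1/(2n))‖Ax − y‖² with minimizer x*, and ĝ(x) = (1/m)∑_{j=1}^m (1/(n p_{I_j}))(a_{I_j}ᵀx − y_{I_j})a_{I_j} where I₁,...,I_m are i.i.d. draws from p, we have E‖ĝ(x) − ĝ(x*) − ∇f(x)‖²_{H^{-1}} ≤ C·(d/m)·‖x − x*‖²_H. -/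
open Matrix

/-!
By the normal equations `Aᵀ(Ax* − y) = 0`, the vector `ĝ(x) − ĝ(x*)` is the average of `m`
i.i.d. copies of the importance-weighted gradient `v_I = (n p_I)⁻¹ (a_Iᵀ(x − x*)) a_I`, whose mean
is `H(x − x*) = ∇f(x)`. The quantity to bound is therefore the variance of a sample mean, i.e.
`1/m` times the variance of one sample, which is at most its second moment
`∑ᵢ (a_iᵀ(x − x*))² ℓ_i / (n p_i) ≤ C d ‖x − x*‖²_H` by the leverage-score condition
`ℓ_i ≤ C d p_i`.
-/

section IIDSampling

variable {ι : Type*} [Fintype ι] {p : ι → ℝ} {m : ℕ}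

theorem sum_pi_prod_mul_prod (p : ι → ℝ) (g : Fin m → ι → ℝ) :
    ∑ σ : Fin m → ι, (∏ l, p (σ l)) * ∏ l, g l (σ l) = ∏ l, ∑ i, p i * g l i := by
  simp_rw [← Finset.prod_mul_distrib]
  exact (Fintype.prod_sum fun l i => p i * g l i).symm

theorem sum_pi_prod_mul_apply (hp : ∑ i, p i = 1) (g : ι → ℝ) (j : Fin m) :
    ∑ σ : Fin m → ι, (∏ l, p (σ l)) * g (σ j) = ∑ i, p i * g i := by
  have h := sum_pi_prod_mul_prod p fun l i => if l = j then g i else 1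
  have hl : ∀ l, ∑ i, p i * (if l = j then g i else 1) = if l = j then ∑ i, p i * g i else 1 := by
    intro l; split_ifs <;> simp [hp]
  simpa only [Finset.prod_ite_eq', Finset.mem_univ, if_true, hl] using h

theorem sum_pi_prod_mul_apply_mul_apply (hp : ∑ i, p i = 1) (g h : ι → ℝ) {j k : Fin m}
    (hjk : j ≠ k) :
    ∑ σ : Fin m → ι, (∏ l, p (σ l)) * (g (σ j) * h (σ k))
      = (∑ i, p i * g i) * ∑ i, p i * h i := by
  have H := sum_pi_prod_mul_prod p fun l i =>
    (if l = j then g i else 1) * (if l = k then h i else 1)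
  have hl : ∀ l, ∑ i, p i * ((if l = j then g i else 1) * (if l = k then h i else 1))
      = (if l = j then ∑ i, p i * g i else 1) * (if l = k then ∑ i, p i * h i else 1) := by
    intro l
    split_ifs with hj hk hk
    · exact absurd (hj.symm.trans hk) hjk
    all_goals simp [hp]
  simpa only [Finset.prod_mul_distrib, Finset.prod_ite_eq', Finset.mem_univ, if_true, hl] using H

theorem sum_pi_prod_mul_apply₂ (hp : ∑ i, p i = 1) (F : ι → ι → ℝ) {j k : Fin m}
    (hjk : j ≠ k) :
    ∑ σ : Fin m → ι, (∏ l, p (σ l)) * F (σ j) (σ k) = ∑ a, ∑ b, p a * p b * F a b := by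
  classical
  calc ∑ σ : Fin m → ι, (∏ l, p (σ l)) * F (σ j) (σ k)
      = ∑ a, ∑ σ : Fin m → ι, (∏ l, p (σ l)) * ((if σ j = a then 1 else 0) * F a (σ k)) := by
        rw [Finset.sum_comm]
        refine Finset.sum_congr rfl fun σ _ => ?_
        simp
    _ = ∑ a, ∑ b, p a * p b * F a b := by
        refine Finset.sum_congr rfl fun a _ => ?_
        rw [sum_pi_prod_mul_apply_mul_apply hp (fun i => if i = a then 1 else 0) (F a) hjk,
          Finset.mul_sum]
        simp [mul_assoc]

variable {E : Type*} [AddCommGroup E] [Module ℝ E]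

theorem sum_pi_prod_mul_bilin_sum_sum (hp : ∑ i, p i = 1) (B : LinearMap.BilinForm ℝ E)
    (w : ι → E) (hw : ∑ i, p i • w i = 0) :
    ∑ σ : Fin m → ι, (∏ l, p (σ l)) * B (∑ j, w (σ j)) (∑ j, w (σ j))
      = m * ∑ i, p i * B (w i) (w i) := by
  have hjk : ∀ j k : Fin m, ∑ σ : Fin m → ι, (∏ l, p (σ l)) * B (w (σ j)) (w (σ k))
      = if j = k then ∑ i, p i * B (w i) (w i) else 0 := by
    intro j k
    split_ifs with h
    · subst h; exact sum_pi_prod_mul_apply hp (fun i => B (w i) (w i)) j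
    · rw [sum_pi_prod_mul_apply₂ hp (fun a b => B (w a) (w b)) h, Finset.sum_comm]
      simpa [Finset.mul_sum, map_sum, mul_left_comm, mul_assoc] using congrArg (fun v => B v v) hw
  calc ∑ σ : Fin m → ι, (∏ l, p (σ l)) * B (∑ j, w (σ j)) (∑ j, w (σ j))
      = ∑ k, ∑ j, ∑ σ : Fin m → ι, (∏ l, p (σ l)) * B (w (σ j)) (w (σ k)) := by
        simp only [map_sum, LinearMap.sum_apply, Finset.mul_sum]
        rw [Finset.sum_comm]
        exact Finset.sum_congr rfl fun _ _ => Finset.sum_comm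
    _ = m * ∑ i, p i * B (w i) (w i) := by
        simp [hjk]

theorem sum_mul_bilin_sub_mean (hp : ∑ i, p i = 1) (B : LinearMap.BilinForm ℝ E) (v : ι → E) :
    ∑ i, p i * B (v i - ∑ i, p i • v i) (v i - ∑ i, p i • v i)
      = ∑ i, p i * B (v i) (v i) - B (∑ i, p i • v i) (∑ i, p i • v i) := by
  set μ := ∑ i, p i • v i
  have hμ : ∀ u : E, ∑ i, p i * B (v i) u = B μ u := fun u => by simp [μ, map_sum]
  have hμ' : ∀ u : E, ∑ i, p i * B u (v i) = B u μ := fun u => by simp [μ, map_sum]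
  simp only [map_sub, LinearMap.sub_apply, mul_sub, Finset.sum_sub_distrib, hμ, hμ',
    ← Finset.sum_mul, hp]
  ring

theorem sum_pi_prod_mul_bilin_sampleMean_sub_le (hp : ∑ i, p i = 1)
    (B : LinearMap.BilinForm ℝ E) (hB : ∀ u, 0 ≤ B u u) (hm : 0 < m) (v : ι → E) :
    ∑ σ : Fin m → ι, (∏ l, p (σ l)) *
        B ((m : ℝ)⁻¹ • ∑ j, v (σ j) - ∑ i, p i • v i) ((m : ℝ)⁻¹ • ∑ j, v (σ j) - ∑ i, p i • v i)
      ≤ (m : ℝ)⁻¹ * ∑ i, p i * B (v i) (v i) := by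
  set μ := ∑ i, p i • v i
  have hm' : (m : ℝ) ≠ 0 := by positivity
  have hcenter : ∀ σ : Fin m → ι,
      (m : ℝ)⁻¹ • ∑ j, v (σ j) - μ = (m : ℝ)⁻¹ • ∑ j, (v (σ j) - μ) := by
    intro σ
    rw [Finset.sum_sub_distrib, smul_sub, Finset.sum_const, Finset.card_univ, Fintype.card_fin,
      ← Nat.cast_smul_eq_nsmul ℝ, smul_smul, inv_mul_cancel₀ hm', one_smul]
  have hw : ∑ i, p i • (v i - μ) = 0 := by
    simp only [smul_sub, Finset.sum_sub_distrib, ← Finset.sum_smul, hp, one_smul, μ, sub_self]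
  calc ∑ σ : Fin m → ι, (∏ l, p (σ l)) * B ((m : ℝ)⁻¹ • ∑ j, v (σ j) - μ)
          ((m : ℝ)⁻¹ • ∑ j, v (σ j) - μ)
      = (m : ℝ)⁻¹ * (m : ℝ)⁻¹ * ∑ σ : Fin m → ι, (∏ l, p (σ l)) *
          B (∑ j, (v (σ j) - μ)) (∑ j, (v (σ j) - μ)) := by
        simp only [hcenter, map_smul, LinearMap.smul_apply, smul_eq_mul, Finset.mul_sum]
        exact Finset.sum_congr rfl fun _ _ => by ring
    _ = (m : ℝ)⁻¹ * (∑ i, p i * B (v i) (v i) - B μ μ) := by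
        rw [sum_pi_prod_mul_bilin_sum_sum hp B _ hw, sum_mul_bilin_sub_mean hp, mul_assoc,
          ← mul_assoc _ (m : ℝ), inv_mul_cancel₀ hm', one_mul]
    _ ≤ (m : ℝ)⁻¹ * ∑ i, p i * B (v i) (v i) := by
        gcongr
        linarith [hB μ]

end IIDSampling

theorem Matrix.dotProduct_self_eq_sum_sq {R ι : Type*} [CommSemiring R] [Fintype ι] (v : ι → R) :
    v ⬝ᵥ v = ∑ i, v i ^ 2 := by
  simp [dotProduct, sq]

theorem Matrix.dotProduct_transpose_mul_self_mulVec {R ι κ : Type*} [CommSemiring R] [Fintype ι]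
    [Fintype κ] (A : Matrix ι κ R) (v : κ → R) :
    v ⬝ᵥ (Aᵀ * A) *ᵥ v = ∑ i, (A *ᵥ v) i ^ 2 := by
  rw [← mulVec_mulVec, dotProduct_mulVec, vecMul_transpose, dotProduct_self_eq_sum_sq]

theorem Matrix.inv_smul_of_ne_zero {K ι : Type*} [Field K] [Fintype ι] [DecidableEq ι] {c : K}
    (hc : c ≠ 0) {M : Matrix ι ι K} (hM : IsUnit M.det) : (c • M)⁻¹ = c⁻¹ • M⁻¹ :=
  inv_eq_right_inv (by rw [smul_mul_smul_comm, mul_inv_cancel₀ hc, one_smul, mul_nonsing_inv _ hM])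

theorem Matrix.mulVec_injective_of_rank_eq {K ι κ : Type*} [Field K] [Fintype ι] [Fintype κ]
    (A : Matrix ι κ K) (h : A.rank = Fintype.card κ) : Function.Injective A.mulVec := by
  have hsum := LinearMap.finrank_range_add_finrank_ker A.mulVecLin
  rw [← Matrix.rank, h, Module.finrank_fintype_fun_eq_card, add_eq_left,
    Submodule.finrank_eq_zero, LinearMap.ker_eq_bot] at hsum
  exact hsum

theorem Matrix.posDef_transpose_mul_self_of_rank_eq {ι κ : Type*} [Fintype ι] [Fintype κ]
    [DecidableEq κ] (A : Matrix ι κ ℝ) (h : A.rank = Fintype.card κ) : (Aᵀ * A).PosDef := by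
  simpa using PosDef.conjTranspose_mul_self A (A.mulVec_injective_of_rank_eq h)

theorem Matrix.transpose_mulVec_sub_eq_zero_of_forall_sum_sq_le {ι κ : Type*} [Fintype ι]
    [Fintype κ] {A : Matrix ι κ ℝ} {y : ι → ℝ} {xs : κ → ℝ}
    (h : ∀ z, ∑ i, (A *ᵥ xs - y) i ^ 2 ≤ ∑ i, (A *ᵥ z - y) i ^ 2) :
    Aᵀ *ᵥ (A *ᵥ xs - y) = 0 := by
  set r := A *ᵥ xs - y
  set c := Aᵀ *ᵥ r
  have hquad : ∀ t : ℝ, 0 ≤ (A *ᵥ c ⬝ᵥ A *ᵥ c) * (t * t) + (-2 * (c ⬝ᵥ c)) * t + 0 := by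
    intro t
    have hz : A *ᵥ (xs - t • c) - y = r - t • A *ᵥ c := by
      simp only [r, mulVec_sub, mulVec_smul]; abel
    have hrc : r ⬝ᵥ A *ᵥ c = c ⬝ᵥ c := by
      rw [dotProduct_mulVec, ← mulVec_transpose, dotProduct_comm]
    have := h (xs - t • c)
    simp only [hz, ← dotProduct_self_eq_sum_sq, sub_dotProduct, dotProduct_sub, smul_dotProduct,
      dotProduct_smul, smul_eq_mul, dotProduct_comm (A *ᵥ c) r, hrc] at this
    linarith
  have hdisc := discrim_le_zero hquad
  rw [discrim] at hdisc
  exact dotProduct_self_eq_zero.mp (by nlinarith)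

section ImportanceSampling

variable {n d : ℕ} (A : Matrix (Fin n) (Fin d) ℝ) (p : Fin n → ℝ)

/-- At `p i = 0` the weight is the junk value `0⁻¹ = 0`; such rows vanish under the leverage
condition (`row_eq_zero_of_leverage_le`). -/
noncomputable def importanceGrad (r : Fin n → ℝ) (i : Fin n) : Fin d → ℝ :=
  ((n : ℝ) * p i)⁻¹ • (r i • A i)

theorem importanceGrad_sub (r r' : Fin n → ℝ) (i : Fin n) :
    importanceGrad A p (r - r') i = importanceGrad A p r i - importanceGrad A p r' i := by
  simp only [importanceGrad, Pi.sub_apply, sub_smul, smul_sub]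

variable {A p}

theorem row_eq_zero_of_leverage_le {K : ℝ} (hG : (Aᵀ * A).PosDef)
    (hlev : ∀ i, A i ⬝ᵥ (Aᵀ * A)⁻¹ *ᵥ A i ≤ K * p i) {i : Fin n} (hi : p i = 0) : A i = 0 := by
  by_contra hAi
  have hpos := hG.inv.dotProduct_mulVec_pos hAi
  rw [star_trivial] at hpos
  exact (hlev i).not_gt (by rwa [hi, mul_zero])

theorem sum_smul_importanceGrad (hA : ∀ i, p i = 0 → A i = 0) (r : Fin n → ℝ) :
    ∑ i, p i • importanceGrad A p r i = (n : ℝ)⁻¹ • (Aᵀ *ᵥ r) := by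
  rw [mulVec_transpose, vecMul_eq_sum, Finset.smul_sum]
  refine Finset.sum_congr rfl fun i _ => ?_
  rcases eq_or_ne (p i) 0 with h | h
  · simp [importanceGrad, h, hA i h]
  · rw [importanceGrad, smul_smul, mul_inv, mul_left_comm, mul_inv_cancel₀ h, mul_one]

theorem sum_mul_importanceGrad_quad_le (hn : 0 < n) {K : ℝ} (hK : 0 ≤ K)
    (hp : ∀ i, 0 ≤ p i) (hlev : ∀ i, A i ⬝ᵥ (Aᵀ * A)⁻¹ *ᵥ A i ≤ K * p i) (r : Fin n → ℝ) :
    ∑ i, p i * (importanceGrad A p r i ⬝ᵥ ((n : ℝ) • (Aᵀ * A)⁻¹) *ᵥ importanceGrad A p r i)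
      ≤ K * ((n : ℝ)⁻¹ * ∑ i, r i ^ 2) := by
  rw [Finset.mul_sum, Finset.mul_sum]
  refine Finset.sum_le_sum fun i _ => ?_
  have hquad : importanceGrad A p r i ⬝ᵥ ((n : ℝ) • (Aᵀ * A)⁻¹) *ᵥ importanceGrad A p r i
      = ((n : ℝ) * p i)⁻¹ ^ 2 * (r i ^ 2 * (n * (A i ⬝ᵥ (Aᵀ * A)⁻¹ *ᵥ A i))) := by
    simp only [importanceGrad, smul_mulVec, mulVec_smul, smul_dotProduct, dotProduct_smul,
      smul_eq_mul]
    ring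
  rw [hquad]
  rcases (hp i).eq_or_lt with h | h
  · rw [← h, zero_mul]
    positivity
  · calc p i * (((n : ℝ) * p i)⁻¹ ^ 2 * (r i ^ 2 * (n * (A i ⬝ᵥ (Aᵀ * A)⁻¹ *ᵥ A i))))
        = ((n : ℝ)⁻¹ * r i ^ 2) * ((A i ⬝ᵥ (Aᵀ * A)⁻¹ *ᵥ A i) / p i) := by
          field_simp
      _ ≤ ((n : ℝ)⁻¹ * r i ^ 2) * K :=
          mul_le_mul_of_nonneg_left ((div_le_iff₀ h).2 (hlev i)) (by positivity)
      _ = K * ((n : ℝ)⁻¹ * r i ^ 2) := mul_comm _ _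

theorem sub_sub_grad_eq_sampleMean_sub_mean {m : ℕ} (hA : ∀ i, p i = 0 → A i = 0)
    {y : Fin n → ℝ} {x xs : Fin d → ℝ} (hxs : Aᵀ *ᵥ (A *ᵥ xs - y) = 0) (σ : Fin m → Fin n) :
    (m : ℝ)⁻¹ • ∑ j, ((n : ℝ) * p (σ j))⁻¹ • ((A *ᵥ x - y) (σ j) • A (σ j))
        - (m : ℝ)⁻¹ • ∑ j, ((n : ℝ) * p (σ j))⁻¹ • ((A *ᵥ xs - y) (σ j) • A (σ j))
        - (n : ℝ)⁻¹ • (Aᵀ *ᵥ (A *ᵥ x - y))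
      = (m : ℝ)⁻¹ • ∑ j, importanceGrad A p (A *ᵥ (x - xs)) (σ j)
        - ∑ i, p i • importanceGrad A p (A *ᵥ (x - xs)) i := by
  have hres : A *ᵥ (x - xs) = (A *ᵥ x - y) - (A *ᵥ xs - y) := by
    rw [mulVec_sub, sub_sub_sub_cancel_right]
  rw [sum_smul_importanceGrad hA, hres, mulVec_sub Aᵀ (A *ᵥ x - y), hxs, sub_zero, ← smul_sub,
    ← Finset.sum_sub_distrib]
  simp only [importanceGrad_sub A p (A *ᵥ x - y) (A *ᵥ xs - y)]
  rfl

end ImportanceSampling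

/-- Leverage-score sampled variance-reduced gradient bound for least squares:
`E‖ĝ(x) − ĝ(x*) − ∇f(x)‖²_{H⁻¹} ≤ C (d/m) ‖x − x*‖²_H`. -/
theorem stmt5 {n d m : ℕ} (hn : 0 < n) (hd : 0 < d) (hm : 0 < m)
    (A : Matrix (Fin n) (Fin d) ℝ) (y : Fin n → ℝ) (C : ℝ) (hC : 0 < C)
    (hrank : A.rank = d)
    (p : Fin n → ℝ) (hp0 : ∀ i, 0 ≤ p i) (hp1 : ∑ i, p i = 1)
    (hlev : ∀ i, A i ⬝ᵥ (Aᵀ * A)⁻¹ *ᵥ A i / (C * d) ≤ p i)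
    (x xs : Fin d → ℝ)
    (hxs : ∀ z, ∑ i, (A *ᵥ xs - y) i ^ 2 ≤ ∑ i, (A *ᵥ z - y) i ^ 2) :
    letI H : Matrix (Fin d) (Fin d) ℝ := (n : ℝ)⁻¹ • (Aᵀ * A)
    letI gradf : (Fin d → ℝ) → (Fin d → ℝ) := fun z => (n : ℝ)⁻¹ • (Aᵀ *ᵥ (A *ᵥ z - y))
    letI ghat : (Fin m → Fin n) → (Fin d → ℝ) → (Fin d → ℝ) := fun σ z =>
      (m : ℝ)⁻¹ • ∑ j, ((n : ℝ) * p (σ j))⁻¹ • ((A *ᵥ z - y) (σ j) • A (σ j))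
    ∑ σ : Fin m → Fin n, (∏ j, p (σ j)) *
        ((ghat σ x - ghat σ xs - gradf x) ⬝ᵥ H⁻¹ *ᵥ (ghat σ x - ghat σ xs - gradf x))
      ≤ C * ((d : ℝ) / m) * ((x - xs) ⬝ᵥ H *ᵥ (x - xs)) := by
  have hG := A.posDef_transpose_mul_self_of_rank_eq (by simpa using hrank)
  have hCd : 0 < C * d := by positivity
  have hlev' : ∀ i, A i ⬝ᵥ (Aᵀ * A)⁻¹ *ᵥ A i ≤ C * d * p i := fun i => by
    rw [mul_comm]; exact (div_le_iff₀ hCd).1 (hlev i)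
  have hn' : (0 : ℝ) < n := Nat.cast_pos.2 hn
  have hHinv : ((n : ℝ)⁻¹ • (Aᵀ * A))⁻¹ = (n : ℝ) • (Aᵀ * A)⁻¹ := by
    rw [inv_smul_of_ne_zero (inv_ne_zero hn'.ne') ((isUnit_iff_isUnit_det _).mp hG.isUnit), inv_inv]
  have hB : ∀ u, 0 ≤ toBilin' ((n : ℝ)⁻¹ • (Aᵀ * A))⁻¹ u u := fun u => by
    simpa [toBilin'_apply'] using
      (hG.smul (inv_pos.2 hn')).inv.posSemidef.dotProduct_mulVec_nonneg u
  rw [smul_mulVec, dotProduct_smul, dotProduct_transpose_mul_self_mulVec, smul_eq_mul]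
  simp only [sub_sub_grad_eq_sampleMean_sub_mean (fun i => row_eq_zero_of_leverage_le hG hlev')
    (transpose_mulVec_sub_eq_zero_of_forall_sum_sq_le hxs), ← toBilin'_apply']
  set v := importanceGrad A p (A *ᵥ (x - xs))
  calc _ ≤ (m : ℝ)⁻¹ * ∑ i, p i * toBilin' ((n : ℝ)⁻¹ • (Aᵀ * A))⁻¹ (v i) (v i) :=
        sum_pi_prod_mul_bilin_sampleMean_sub_le hp1 _ hB hm v
    _ ≤ (m : ℝ)⁻¹ * (C * d * ((n : ℝ)⁻¹ * ∑ i, (A *ᵥ (x - xs)) i ^ 2)) := by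
        gcongr
        simp only [toBilin'_apply', hHinv]
        exact sum_mul_importanceGrad_quad_le hn hCd.le hp0 hlev' _
    _ = _ := by ring
end

section
/- Let ψ be a random convex λ-smooth function on ℝ^d with E[ψ(x)] = f(x) and E[∇ψ(x)] = ∇f(x) for all x, where f has minimizer x* with ∇f(x*) = 0. Then E‖∇ψ(x) − ∇ψ(x*) − ∇f(x)‖² ≤ 2λ·(f(x) − f(x*)). -/
open MeasureTheory Filter Topology Finset
open scoped RealInnerProductSpace

/-!
Co-coercivity of the gradient of a convex `λ`-smooth function bounds `‖∇ψ(x) − ∇ψ(x*)‖²` by `2λ`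
times the Bregman divergence `ψ(x) − ψ(x*) − ⟪∇ψ(x*), x − x*⟫`, whose expectation is
`f(x) − f(x*)` since `E ∇ψ(x*) = ∇f(x*) = 0`. Centring `∇ψ(x) − ∇ψ(x*)` at its mean `∇f(x)` only
lowers its second moment.
-/

theorem abs_sub_sub_sum_range_le {x g : ℕ → ℝ} {n : ℕ}
    (h : ∀ i < n, g i ≤ x (i + 1) - x i ∧ x (i + 1) - x i ≤ g (i + 1)) :
    |x n - x 0 - ∑ i ∈ range n, g i| ≤ g n - g 0 := by
  have hlow : ∑ i ∈ range n, g i ≤ x n - x 0 := by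
    rw [← sum_range_sub]
    exact sum_le_sum fun i hi => (h i (mem_range.mp hi)).1
  have hup : x n - x 0 ≤ ∑ i ∈ range n, g (i + 1) := by
    rw [← sum_range_sub]
    exact sum_le_sum fun i hi => (h i (mem_range.mp hi)).2
  have hg := sum_range_sub g n
  rw [sum_sub_distrib] at hg
  rw [abs_le]
  constructor <;> linarith

section Convex

variable {F : Type*} [NormedAddCommGroup F] [InnerProductSpace ℝ F] [CompleteSpace F]
  {ψ : F → ℝ} {a b : F}

theorem ConvexOn.inner_gradient_le_sub (hψ : ConvexOn ℝ Set.univ ψ)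
    (ha : DifferentiableAt ℝ ψ a) (b : F) : ⟪gradient ψ a, b - a⟫ ≤ ψ b - ψ a := by
  let L : ℝ →ᵃ[ℝ] F := AffineMap.lineMap a b
  have hline : HasDerivAt (ψ ∘ L) ⟪gradient ψ a, b - a⟫ 0 := by
    have hψ' : HasGradientAt ψ (gradient ψ a) (L 0) := by simpa [L] using ha.hasGradientAt
    simpa using hψ'.hasFDerivAt.comp_hasDerivAt (0 : ℝ) AffineMap.hasDerivAt_lineMap
  have hconv : ConvexOn ℝ Set.univ (ψ ∘ L) := hψ.comp_affineMap L
  simpa [slope_def_field, L] using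
    hconv.le_slope_of_hasDerivAt (Set.mem_univ 0) (Set.mem_univ 1) one_pos hline

theorem ConvexOn.sub_le_inner_gradient (hψ : ConvexOn ℝ Set.univ ψ)
    (hb : DifferentiableAt ℝ ψ b) (a : F) : ψ b - ψ a ≤ ⟪gradient ψ b, b - a⟫ := by
  have := hψ.inner_gradient_le_sub hb a
  rw [← neg_sub b a, inner_neg_right] at this
  linarith

theorem ConvexOn.sq_norm_gradient_sub_le_bregman {lam : ℝ} (hψ : ConvexOn ℝ Set.univ ψ)
    (ha : DifferentiableAt ℝ ψ a)
    (hsmooth : ∀ p q, ψ q ≤ ψ p + ⟪gradient ψ p, q - p⟫ + lam / 2 * ‖q - p‖ ^ 2) (b : F) :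
    ‖gradient ψ b - gradient ψ a‖ ^ 2 ≤ 2 * lam * (ψ b - ψ a - ⟪gradient ψ a, b - a⟫) := by
  set u := gradient ψ b - gradient ψ a
  -- compare the tangent at `a` with the quadratic upper model at `b` at the point `b - t • u`
  have hmodel : ∀ t : ℝ, t * ‖u‖ ^ 2 - lam / 2 * t ^ 2 * ‖u‖ ^ 2
      ≤ ψ b - ψ a - ⟪gradient ψ a, b - a⟫ := by
    intro t
    have hlow := hψ.inner_gradient_le_sub ha (b - t • u)
    have hup := hsmooth b (b - t • u)
    have hu : ⟪gradient ψ b, u⟫ - ⟪gradient ψ a, u⟫ = ‖u‖ ^ 2 := by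
      rw [← inner_sub_left, real_inner_self_eq_norm_sq]
    have htu : t * ⟪gradient ψ b, u⟫ - t * ⟪gradient ψ a, u⟫ = t * ‖u‖ ^ 2 := by
      rw [← mul_sub, hu]
    rw [sub_sub_cancel_left, norm_neg, norm_smul, Real.norm_eq_abs, mul_pow, sq_abs,
      inner_neg_right, real_inner_smul_right] at hup
    rw [sub_right_comm, inner_sub_right, real_inner_smul_right] at hlow
    linarith
  have hbreg : 0 ≤ ψ b - ψ a - ⟪gradient ψ a, b - a⟫ := by
    linarith [hψ.inner_gradient_le_sub ha b]
  rcases lt_or_ge 0 lam with hlam | hlam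
  · have := hmodel lam⁻¹
    field_simp at this
    nlinarith
  · have hbreg' : ψ b - ψ a - ⟪gradient ψ a, b - a⟫ = 0 := by
      have := hsmooth a b
      nlinarith [mul_nonpos_of_nonpos_of_nonneg hlam (sq_nonneg ‖b - a‖)]
    have := hmodel 1
    rw [hbreg'] at this ⊢
    nlinarith [mul_nonpos_of_nonpos_of_nonneg hlam (sq_nonneg ‖u‖)]

theorem ConvexOn.sq_norm_gradient_sub_le_inner {lam : ℝ} (hψ : ConvexOn ℝ Set.univ ψ)
    (ha : DifferentiableAt ℝ ψ a) (hb : DifferentiableAt ℝ ψ b)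
    (hsmooth : ∀ p q, ψ q ≤ ψ p + ⟪gradient ψ p, q - p⟫ + lam / 2 * ‖q - p‖ ^ 2) :
    ‖gradient ψ b - gradient ψ a‖ ^ 2 ≤ lam * ⟪gradient ψ b - gradient ψ a, b - a⟫ := by
  have hab := hψ.sq_norm_gradient_sub_le_bregman ha hsmooth b
  have hba := hψ.sq_norm_gradient_sub_le_bregman hb hsmooth a
  rw [norm_sub_rev, ← neg_sub b a, inner_neg_right] at hba
  rw [inner_sub_left]
  linarith

theorem ConvexOn.tendsto_sum_inner_gradient (hψ : ConvexOn ℝ Set.univ ψ)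
    (hd : Differentiable ℝ ψ) (a v : F) :
    Tendsto (fun n : ℕ => ∑ i ∈ range n, ⟪gradient ψ (a + ((i : ℝ) / n) • v), v⟫ / n) atTop
      (𝓝 (ψ (a + v) - ψ a)) := by
  set D : ℝ → ℝ := fun t => ⟪gradient ψ (a + t • v), v⟫
  have hbound : ∀ n : ℕ, 0 < n →
      |ψ (a + v) - ψ a - ∑ i ∈ range n, D (i / n) / n| ≤ (D 1 - D 0) / n := by
    intro n hn
    have hn' : (n : ℝ) ≠ 0 := by positivity
    have := abs_sub_sub_sum_range_le (n := n) (x := fun i => ψ (a + ((i : ℝ) / n) • v))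
      (g := fun i => D (i / n) / n) fun i _ => by
        have hstep : a + (((i + 1 : ℕ) : ℝ) / n) • v - (a + ((i : ℝ) / n) • v)
            = (n : ℝ)⁻¹ • v := by
          push_cast; module
        have h1 := hψ.inner_gradient_le_sub (hd (a + ((i : ℝ) / n) • v))
          (a + (((i + 1 : ℕ) : ℝ) / n) • v)
        have h2 := hψ.sub_le_inner_gradient (hd (a + (((i + 1 : ℕ) : ℝ) / n) • v))
          (a + ((i : ℝ) / n) • v)
        rw [hstep, real_inner_smul_right] at h1 h2
        simp only [D, div_eq_inv_mul] at h1 h2 ⊢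
        exact ⟨by linarith, by linarith⟩
    simpa [D, hn', sub_div] using this
  rw [tendsto_iff_norm_sub_tendsto_zero]
  refine squeeze_zero' (Eventually.of_forall fun _ => norm_nonneg _) ?_
    (tendsto_const_div_atTop_nhds_zero_nat (D 1 - D 0))
  filter_upwards [eventually_gt_atTop 0] with n hn
  rw [Real.norm_eq_abs, abs_sub_comm]
  exact hbound n hn

end Convex

theorem integral_norm_sub_integral_sq_le {Ω E : Type*} [MeasurableSpace Ω] {μ : Measure Ω}
    [IsProbabilityMeasure μ] [NormedAddCommGroup E] [InnerProductSpace ℝ E] [CompleteSpace E]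
    {u : Ω → E} (hu : Integrable u μ) :
    ∫ ω, ‖u ω - ∫ ω', u ω' ∂μ‖ ^ 2 ∂μ ≤ ∫ ω, ‖u ω‖ ^ 2 ∂μ := by
  set c := ∫ ω, u ω ∂μ
  by_cases hvar : Integrable (fun ω => ‖u ω - c‖ ^ 2) μ
  · have hcross : Integrable (fun ω => 2 * ⟪c, u ω⟫ - ‖c‖ ^ 2) μ :=
      ((hu.const_inner c).const_mul 2).sub (integrable_const _)
    have hsplit : (fun ω => ‖u ω‖ ^ 2) = fun ω => ‖u ω - c‖ ^ 2 + (2 * ⟪c, u ω⟫ - ‖c‖ ^ 2) := by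
      funext ω
      rw [norm_sub_sq_real, real_inner_comm]
      ring
    have hmean : ∫ ω, (2 * ⟪c, u ω⟫ - ‖c‖ ^ 2) ∂μ = ‖c‖ ^ 2 := by
      rw [integral_sub ((hu.const_inner c).const_mul 2) (integrable_const _), integral_const_mul,
        integral_inner hu, real_inner_self_eq_norm_sq, integral_const, probReal_univ, one_smul]
      ring
    rw [hsplit, integral_add hvar hcross, hmean]
    linarith [sq_nonneg ‖c‖]
  · rw [integral_undef hvar]
    exact integral_nonneg fun ω => sq_nonneg _

section Random

variable {Ω F : Type*} [MeasurableSpace Ω] {μ : Measure Ω}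
  [NormedAddCommGroup F] [InnerProductSpace ℝ F] [CompleteSpace F]
  {ψ : Ω → F → ℝ}

theorem integrable_sub_of_convexOn (hconv : ∀ ω, ConvexOn ℝ Set.univ (ψ ω))
    (hdiff : ∀ ω, Differentiable ℝ (ψ ω))
    (hmeas : ∀ z, AEStronglyMeasurable (fun ω => gradient (ψ ω) z) μ) {a b : F}
    (ha : Integrable (fun ω => gradient (ψ ω) a) μ)
    (hb : Integrable (fun ω => gradient (ψ ω) b) μ) :
    Integrable (fun ω => ψ ω b - ψ ω a) μ := by
  -- `ω ↦ ψ ω z` need not be measurable, but `ψ ω b - ψ ω a` is a pointwise limit of Riemann sums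
  -- of `⟪∇ψ ω, b - a⟫` along the segment, which are measurable in `ω`
  have hsub : AEStronglyMeasurable (fun ω => ψ ω b - ψ ω a) μ := by
    have hlim := fun ω => (hconv ω).tendsto_sum_inner_gradient (hdiff ω) a (b - a)
    simp only [add_sub_cancel] at hlim
    exact aestronglyMeasurable_of_tendsto_ae atTop (fun n => by fun_prop) (ae_of_all _ hlim)
  exact integrable_of_le_of_le hsub
    (ae_of_all _ fun ω => (hconv ω).inner_gradient_le_sub (hdiff ω a) b)
    (ae_of_all _ fun ω => (hconv ω).sub_le_inner_gradient (hdiff ω b) a)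
    (ha.inner_const _) (hb.inner_const _)

theorem integral_sq_norm_gradient_sub_le_sub {lam : ℝ}
    (hconv : ∀ ω, ConvexOn ℝ Set.univ (ψ ω)) (hdiff : ∀ ω, Differentiable ℝ (ψ ω))
    (hsmooth : ∀ ω a b, ψ ω b ≤ ψ ω a + ⟪gradient (ψ ω) a, b - a⟫ + lam / 2 * ‖b - a‖ ^ 2)
    {x xs : F} (hx : Integrable (fun ω => ψ ω x) μ) (hxs : Integrable (fun ω => ψ ω xs) μ)
    (hgradint : Integrable (fun ω => gradient (ψ ω) xs) μ)
    (hmean : ∫ ω, gradient (ψ ω) xs ∂μ = 0) :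
    ∫ ω, ‖gradient (ψ ω) x - gradient (ψ ω) xs‖ ^ 2 ∂μ
      ≤ 2 * lam * (∫ ω, ψ ω x ∂μ - ∫ ω, ψ ω xs ∂μ) := by
  have hincr : Integrable (fun ω => ψ ω x - ψ ω xs) μ := hx.sub hxs
  have htangent : Integrable (fun ω => ⟪gradient (ψ ω) xs, x - xs⟫) μ :=
    hgradint.inner_const _
  have htangent0 : ∫ ω, ⟪gradient (ψ ω) xs, x - xs⟫ ∂μ = 0 := by
    simp_rw [real_inner_comm (x - xs)]
    rw [integral_inner hgradint, hmean, inner_zero_right]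
  have hbregman : ∫ ω, ψ ω x ∂μ - ∫ ω, ψ ω xs ∂μ
      = ∫ ω, (ψ ω x - ψ ω xs - ⟪gradient (ψ ω) xs, x - xs⟫) ∂μ := by
    rw [integral_sub hincr htangent, htangent0, sub_zero, integral_sub hx hxs]
  rw [hbregman, ← integral_const_mul]
  exact integral_mono_of_nonneg (ae_of_all _ fun _ => sq_nonneg _)
    ((hincr.sub htangent).const_mul _)
    (ae_of_all _ fun ω => (hconv ω).sq_norm_gradient_sub_le_bregman (hdiff ω xs) (hsmooth ω) x)

theorem integral_sq_norm_gradient_sub_le_inner {lam : ℝ}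
    (hconv : ∀ ω, ConvexOn ℝ Set.univ (ψ ω)) (hdiff : ∀ ω, Differentiable ℝ (ψ ω))
    (hsmooth : ∀ ω a b, ψ ω b ≤ ψ ω a + ⟪gradient (ψ ω) a, b - a⟫ + lam / 2 * ‖b - a‖ ^ 2)
    {x xs : F} (hu : Integrable (fun ω => gradient (ψ ω) x - gradient (ψ ω) xs) μ) :
    ∫ ω, ‖gradient (ψ ω) x - gradient (ψ ω) xs‖ ^ 2 ∂μ
      ≤ lam * ⟪∫ ω, (gradient (ψ ω) x - gradient (ψ ω) xs) ∂μ, x - xs⟫ := by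
  calc ∫ ω, ‖gradient (ψ ω) x - gradient (ψ ω) xs‖ ^ 2 ∂μ
      ≤ ∫ ω, lam * ⟪gradient (ψ ω) x - gradient (ψ ω) xs, x - xs⟫ ∂μ :=
        integral_mono_of_nonneg (ae_of_all _ fun _ => sq_nonneg _)
          ((hu.inner_const _).const_mul _)
          (ae_of_all _ fun ω =>
            (hconv ω).sq_norm_gradient_sub_le_inner (hdiff ω xs) (hdiff ω x) (hsmooth ω))
    _ = lam * ⟪∫ ω, (gradient (ψ ω) x - gradient (ψ ω) xs) ∂μ, x - xs⟫ := by
        simp_rw [real_inner_comm (x - xs)]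
        rw [integral_const_mul, integral_inner hu]

theorem integral_sq_norm_gradient_sub_le {lam : ℝ} {f : F → ℝ}
    (hconv : ∀ ω, ConvexOn ℝ Set.univ (ψ ω)) (hdiff : ∀ ω, Differentiable ℝ (ψ ω))
    (hsmooth : ∀ ω a b, ψ ω b ≤ ψ ω a + ⟪gradient (ψ ω) a, b - a⟫ + lam / 2 * ‖b - a‖ ^ 2)
    (hf : ∀ z, f z = ∫ ω, ψ ω z ∂μ)
    (hgradint : ∀ z, Integrable (fun ω => gradient (ψ ω) z) μ)
    (hgrad : ∀ z, gradient f z = ∫ ω, gradient (ψ ω) z ∂μ) {xs : F} (hgrad0 : gradient f xs = 0)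
    (x : F) :
    ∫ ω, ‖gradient (ψ ω) x - gradient (ψ ω) xs‖ ^ 2 ∂μ ≤ 2 * lam * (f x - f xs) := by
  have hincr : ∀ a b, Integrable (fun ω => ψ ω b - ψ ω a) μ := fun a b =>
    integrable_sub_of_convexOn hconv hdiff (fun z => (hgradint z).aestronglyMeasurable)
      (hgradint a) (hgradint b)
  by_cases hxs : Integrable (fun ω => ψ ω xs) μ
  · have hx : Integrable (fun ω => ψ ω x) μ :=
      ((hincr xs x).add hxs).congr (ae_of_all _ fun _ => sub_add_cancel _ _)
    rw [hf, hf]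
    exact integral_sq_norm_gradient_sub_le_sub hconv hdiff hsmooth hx hxs (hgradint xs)
      (by rw [← hgrad, hgrad0])
  · -- then no `ψ · z` is integrable, and `f = 0` by the junk value of `∫`
    have hf0 : f = fun _ => 0 := funext fun z => (hf z).trans <| integral_undef fun hz =>
      hxs (hz.sub (hincr xs z) |>.congr (ae_of_all _ fun _ => sub_sub_cancel _ _))
    have hmean : ∫ ω, (gradient (ψ ω) x - gradient (ψ ω) xs) ∂μ = 0 := by
      rw [integral_sub (hgradint x) (hgradint xs), ← hgrad, ← hgrad, hgrad0, hf0,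
        gradient_fun_const, sub_zero]
    have := integral_sq_norm_gradient_sub_le_inner hconv hdiff hsmooth
      ((hgradint x).sub (hgradint xs))
    simpa [hmean, hf0] using this

end Random

theorem stmt9_general {d : ℕ} {Ω : Type*} [MeasurableSpace Ω]
    (μ : Measure Ω) [IsProbabilityMeasure μ]
    (ψ : Ω → EuclideanSpace ℝ (Fin d) → ℝ) (f : EuclideanSpace ℝ (Fin d) → ℝ) (lam : ℝ)
    (hconv : ∀ ω, ConvexOn ℝ Set.univ (ψ ω))
    (hdiff : ∀ ω, Differentiable ℝ (ψ ω))
    (hsmooth : ∀ ω a b, ψ ω b ≤ ψ ω a + ⟪gradient (ψ ω) a, b - a⟫ + lam / 2 * ‖b - a‖ ^ 2)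
    (hf : ∀ z, f z = ∫ ω, ψ ω z ∂μ)
    (hgradint : ∀ z, Integrable (fun ω => gradient (ψ ω) z) μ)
    (hgrad : ∀ z, gradient f z = ∫ ω, gradient (ψ ω) z ∂μ)
    (xs x : EuclideanSpace ℝ (Fin d))
    (hgrad0 : gradient f xs = 0) :
    ∫ ω, ‖gradient (ψ ω) x - gradient (ψ ω) xs - gradient f x‖ ^ 2 ∂μ
      ≤ 2 * lam * (f x - f xs) := by
  have hu : Integrable (fun ω => gradient (ψ ω) x - gradient (ψ ω) xs) μ :=
    (hgradint x).sub (hgradint xs)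
  have hmean : ∫ ω, (gradient (ψ ω) x - gradient (ψ ω) xs) ∂μ = gradient f x := by
    rw [integral_sub (hgradint x) (hgradint xs), ← hgrad, ← hgrad, hgrad0, sub_zero]
  calc ∫ ω, ‖gradient (ψ ω) x - gradient (ψ ω) xs - gradient f x‖ ^ 2 ∂μ
      ≤ ∫ ω, ‖gradient (ψ ω) x - gradient (ψ ω) xs‖ ^ 2 ∂μ := by
        simpa only [hmean] using integral_norm_sub_integral_sq_le hu
    _ ≤ 2 * lam * (f x - f xs) :=
        integral_sq_norm_gradient_sub_le hconv hdiff hsmooth hf hgradint hgrad hgrad0 x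

/-- For a random convex λ-smooth `ψ` with `E[ψ] = f`, `E[∇ψ] = ∇f`, and
minimizer `x*` of `f` with `∇f(x*) = 0`:
`E‖∇ψ(x) − ∇ψ(x*) − ∇f(x)‖² ≤ 2λ(f(x) − f(x*))`. -/
theorem stmt9 {d : ℕ} {Ω : Type*} [MeasurableSpace Ω]
    (μ : Measure Ω) [IsProbabilityMeasure μ]
    (ψ : Ω → EuclideanSpace ℝ (Fin d) → ℝ) (f : EuclideanSpace ℝ (Fin d) → ℝ) (lam : ℝ)
    (hconv : ∀ ω, ConvexOn ℝ Set.univ (ψ ω))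
    (hdiff : ∀ ω, Differentiable ℝ (ψ ω))
    (hsmooth : ∀ ω a b, ψ ω b ≤ ψ ω a + ⟪gradient (ψ ω) a, b - a⟫ + lam / 2 * ‖b - a‖ ^ 2)
    (hf : ∀ z, f z = ∫ ω, ψ ω z ∂μ)
    (hgradint : ∀ z, Integrable (fun ω => gradient (ψ ω) z) μ)
    (hgrad : ∀ z, gradient f z = ∫ ω, gradient (ψ ω) z ∂μ)
    (xs x : EuclideanSpace ℝ (Fin d))
    (hgrad0 : gradient f xs = 0) (hmin : ∀ z, f xs ≤ f z)
    (hint : Integrable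
      (fun ω => ‖gradient (ψ ω) x - gradient (ψ ω) xs - gradient f x‖ ^ 2) μ) :
    ∫ ω, ‖gradient (ψ ω) x - gradient (ψ ω) xs - gradient f x‖ ^ 2 ∂μ
      ≤ 2 * lam * (f x - f xs) :=
  stmt9_general μ ψ f lam hconv hdiff hsmooth hf hgradint hgrad xs x hgrad0
end
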